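/- For the NFA of Figure 5 (states q₀, q₁, q₂, q₃, q₄, f), Player 1 has no positional (memoryless) winning strategy in the capacity game, but has a finite-memory winning strategy: play c from {q₀}, then alternate a and b from the support {q₁,q₂,q₃,q₄}, playing c as soon as the current support does not contain q₂. -/
import Mathlib


/-- States of the NFA of Figure 5 (plus the completing losing sink). -/
inductive Q17 : Type
  | q0 | q1 | q2 | q3 | q4 | tgt | sink
deriving DecidableEq

/-- Alphabet of the NFA of Figure 5. -/
inductive A17 : Type
  | a | b | c
deriving DecidableEq

/-- Transitions: a swaps q1↔q2 and q3↔q4; b loops on q1, swaps q2↔q3 and sends q3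
also to q4 and q4 to q3; c goes from q0 to each of q1,q2,q3,q4 and from q1,q3,q4 to
the target; unspecified transitions go to the losing sink. -/
def d17 : Q17 → A17 → Q17 → Prop
  | .q1, .a, .q2 => True
  | .q2, .a, .q1 => True
  | .q3, .a, .q4 => True
  | .q4, .a, .q3 => True
  | .q1, .b, .q1 => True
  | .q2, .b, .q3 => True
  | .q3, .b, .q2 => True
  | .q3, .b, .q4 => True
  | .q4, .b, .q3 => True
  | .q0, .c, .q1 => True
  | .q0, .c, .q2 => True
  | .q0, .c, .q3 => True
  | .q0, .c, .q4 => True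
  | .q1, .c, .tgt => True
  | .q3, .c, .tgt => True
  | .q4, .c, .tgt => True
  | .tgt, _, .tgt => True
  | .q0, .a, .sink => True
  | .q0, .b, .sink => True
  | .q2, .c, .sink => True
  | .sink, _, .sink => True
  | _, _, _ => False

/-- Domain of a transfer graph. -/
def dom (G : Set (Q17 × Q17)) : Set Q17 := {q | ∃ r, (q, r) ∈ G}

/-- Image of a transfer graph. -/
def im (G : Set (Q17 × Q17)) : Set Q17 := {r | ∃ q, (q, r) ∈ G}

/-- A play in the support arena of the NFA of Figure 5, starting in {q0}. -/
structure Play17 where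
  S : ℕ → Set Q17
  act : ℕ → A17
  G : ℕ → Set (Q17 × Q17)
  init : S 0 = {Q17.q0}
  compat : ∀ n, ∀ p ∈ G n, d17 p.1 (act n) p.2
  hdom : ∀ n, dom (G n) = S n
  him : ∀ n, im (G n) = S (n + 1)

/-- An accumulator: a successor-closed sequence of subsets of the supports. -/
def IsAccumulator (P : Play17) (T : ℕ → Set Q17) : Prop :=
  (∀ j, T j ⊆ P.S j) ∧ ∀ j s t, s ∈ T j → (s, t) ∈ P.G j → t ∈ T (j + 1)

/-- The entries of an accumulator. -/
def Entries (P : Play17) (T : ℕ → Set Q17) : Set (ℕ × Q17 × Q17) :=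
  {e | (e.2.1, e.2.2) ∈ P.G e.1 ∧ e.2.1 ∉ T e.1 ∧ e.2.2 ∈ T (e.1 + 1)}

/-- A play is won by Player 1 in the capacity game iff it reaches the support {f}
or has infinite capacity. -/
def WinPlay (P : Play17) : Prop :=
  (∃ n, P.S n = ({Q17.tgt} : Set Q17)) ∨
  ∃ T, IsAccumulator P T ∧ (Entries P T).Infinite

-- ================= auxiliary material =================

instance : Fintype Q17 :=
  ⟨⟨([Q17.q0, Q17.q1, Q17.q2, Q17.q3, Q17.q4, Q17.tgt, Q17.sink] : List Q17), by decide⟩,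
    fun x => by cases x <;> decide⟩

namespace Cap17
open Q17 A17

def Fs : Set Q17 := {q | q = q1 ∨ q = q2 ∨ q = q3 ∨ q = q4}
def TS : Set Q17 := {q | q = tgt ∨ q = sink}

def G0full : Set (Q17 × Q17) :=
  {p | p = (q0, q1) ∨ p = (q0, q2) ∨ p = (q0, q3) ∨ p = (q0, q4)}
def Ea : Set (Q17 × Q17) :=
  {p | p = (q1, q2) ∨ p = (q2, q1) ∨ p = (q3, q4) ∨ p = (q4, q3)}
def Eb : Set (Q17 × Q17) :=
  {p | p = (q1, q1) ∨ p = (q2, q3) ∨ p = (q3, q2) ∨ p = (q3, q4) ∨ p = (q4, q3)}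
def Gc : Set (Q17 × Q17) :=
  {p | p = (q1, tgt) ∨ p = (q2, sink) ∨ p = (q3, tgt) ∨ p = (q4, tgt)}
def Gid2 : Set (Q17 × Q17) := {p | p = (tgt, tgt) ∨ p = (sink, sink)}
def G0sink : Set (Q17 × Q17) := {p | p = (q0, sink)}
def Gsink : Set (Q17 × Q17) := {p | p = (sink, sink)}

lemma dom_G0full : dom G0full = {Q17.q0} := by
  ext q; simp [dom, G0full, Prod.ext_iff]; aesop
lemma im_G0full : im G0full = Fs := by
  ext q; simp [im, G0full, Fs, Prod.ext_iff]; aesop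
lemma dom_Ea : dom Ea = Fs := by
  ext q; simp [dom, Ea, Fs, Prod.ext_iff]; aesop
lemma im_Ea : im Ea = Fs := by
  ext q; simp [im, Ea, Fs, Prod.ext_iff]; aesop
lemma dom_Eb : dom Eb = Fs := by
  ext q; simp [dom, Eb, Fs, Prod.ext_iff]; aesop
lemma im_Eb : im Eb = Fs := by
  ext q; simp [im, Eb, Fs, Prod.ext_iff]; aesop
lemma dom_Gc : dom Gc = Fs := by
  ext q; simp [dom, Gc, Fs, Prod.ext_iff]; aesop
lemma im_Gc : im Gc = TS := by
  ext q; simp [im, Gc, TS, Prod.ext_iff]; aesop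
lemma dom_Gid2 : dom Gid2 = TS := by
  ext q; simp [dom, Gid2, TS, Prod.ext_iff]; aesop
lemma im_Gid2 : im Gid2 = TS := by
  ext q; simp [im, Gid2, TS, Prod.ext_iff]; aesop
lemma dom_G0sink : dom G0sink = {Q17.q0} := by
  ext q; simp [dom, G0sink, Prod.ext_iff]
lemma im_G0sink : im G0sink = {Q17.sink} := by
  ext q; simp [im, G0sink, Prod.ext_iff]
lemma dom_Gsink : dom Gsink = {Q17.sink} := by
  ext q; simp [dom, Gsink, Prod.ext_iff]
lemma im_Gsink : im Gsink = {Q17.sink} := by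
  ext q; simp [im, Gsink, Prod.ext_iff]

lemma Fs_ne_tgt : Fs ≠ ({Q17.tgt} : Set Q17) := by
  intro h
  have : Q17.q1 ∈ Fs := by simp [Fs]
  rw [h] at this; simp at this
lemma TS_ne_tgt : TS ≠ ({Q17.tgt} : Set Q17) := by
  intro h
  have : Q17.sink ∈ TS := by simp [TS]
  rw [h] at this; simp at this
lemma q0_ne_tgt : ({Q17.q0} : Set Q17) ≠ ({Q17.tgt} : Set Q17) := by
  intro h
  have : Q17.q0 ∈ ({Q17.q0} : Set Q17) := rfl
  rw [h] at this; simp at this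
lemma sink_ne_tgt : ({Q17.sink} : Set Q17) ≠ ({Q17.tgt} : Set Q17) := by
  intro h
  have : Q17.sink ∈ ({Q17.sink} : Set Q17) := rfl
  rw [h] at this; simp at this

/-- generic finiteness from a bound on entry times -/
lemma entries_finite_of_bound (P : Play17) (T : ℕ → Set Q17) (M : ℕ)
    (h : ∀ e ∈ Entries P T, e.1 < M) : (Entries P T).Finite := by
  apply Set.Finite.subset ((Set.finite_Iio M).prod
    (Set.finite_univ : (Set.univ : Set (Q17 × Q17)).Finite))
  intro e he
  exact ⟨h e he, trivial⟩

/-- a state whose membership in T is persistent admits a bound beyond which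
no (x, x)-type entries happen -/
lemma persistent (T : ℕ → Set Q17) (x : Q17) (N : ℕ)
    (h : ∀ j, N ≤ j → x ∈ T j → x ∈ T (j + 1)) :
    ∃ M, N ≤ M ∧ ∀ j, M ≤ j → ¬(x ∉ T j ∧ x ∈ T (j + 1)) := by
  by_cases he : ∃ j, N ≤ j ∧ x ∈ T j
  · obtain ⟨j0, hj0, hx⟩ := he
    have hall : ∀ j, j0 ≤ j → x ∈ T j := by
      intro j hj
      induction j, hj using Nat.le_induction with
      | base => exact hx
      | succ n hn ih => exact h n (le_trans hj0 hn) ih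
    exact ⟨j0, hj0, fun j hj hc => hc.1 (hall j hj)⟩
  · push_neg at he
    exact ⟨N, le_refl N, fun j hj hc => he (j + 1) (by omega) hc.2⟩

/-- entries bound for a 2-cycle (swap) pair -/
lemma pair_swap (T : ℕ → Set Q17) (x y : Q17)
    (hx : ∀ j, 1 ≤ j → x ∈ T j → y ∈ T (j + 1))
    (hy : ∀ j, 1 ≤ j → y ∈ T j → x ∈ T (j + 1)) :
    ∃ M, 1 ≤ M ∧ ∀ j, M ≤ j →
      ¬(x ∉ T j ∧ y ∈ T (j + 1)) ∧ ¬(y ∉ T j ∧ x ∈ T (j + 1)) := by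
  by_cases hboth : ∃ j, 1 ≤ j ∧ (x ∈ T j ∧ y ∈ T j)
  · obtain ⟨j0, hj0, hb⟩ := hboth
    have hall : ∀ j, j0 ≤ j → x ∈ T j ∧ y ∈ T j := by
      intro j hj
      induction j, hj using Nat.le_induction with
      | base => exact hb
      | succ n hn ih => exact ⟨hy n (le_trans hj0 hn) ih.2, hx n (le_trans hj0 hn) ih.1⟩
    refine ⟨j0, hj0, fun j hj => ⟨fun hc => ?_, fun hc => ?_⟩⟩
    · exact hc.1 (hall j hj).1
    · exact hc.1 (hall j hj).2
  · by_cases hone : ∃ j, 1 ≤ j ∧ (x ∈ T j ∨ y ∈ T j)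
    · obtain ⟨j0, hj0, hb⟩ := hone
      have hall : ∀ j, j0 ≤ j → (x ∈ T j ∨ y ∈ T j) := by
        intro j hj
        induction j, hj using Nat.le_induction with
        | base => exact hb
        | succ n hn ih =>
          rcases ih with h | h
          · exact Or.inr (hx n (le_trans hj0 hn) h)
          · exact Or.inl (hy n (le_trans hj0 hn) h)
      push_neg at hboth
      refine ⟨j0, hj0, fun j hj => ⟨fun hc => ?_, fun hc => ?_⟩⟩
      · have hyj : y ∈ T j := (hall j hj).resolve_left hc.1
        have hxj : x ∈ T (j + 1) := hy j (le_trans hj0 hj) hyj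
        exact hboth (j + 1) (by omega) hxj hc.2
      · have hxj : x ∈ T j := (hall j hj).resolve_right hc.1
        have hyj : y ∈ T (j + 1) := hx j (le_trans hj0 hj) hxj
        exact hboth (j + 1) (by omega) hc.2 hyj
    · push_neg at hone
      refine ⟨1, le_refl 1, fun j hj => ⟨fun hc => ?_, fun hc => ?_⟩⟩
      · exact (hone (j + 1) (by omega)).2 hc.2
      · exact (hone (j + 1) (by omega)).1 hc.2

/-- entries bound for the b-component {q2, q3, q4} of Eb -/
lemma eb_bound (T : ℕ → Set Q17)
    (h2 : ∀ j, 1 ≤ j → q2 ∈ T j → q3 ∈ T (j + 1))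
    (h4 : ∀ j, 1 ≤ j → q4 ∈ T j → q3 ∈ T (j + 1))
    (h3 : ∀ j, 1 ≤ j → q3 ∈ T j → q2 ∈ T (j + 1) ∧ q4 ∈ T (j + 1)) :
    ∃ M, 1 ≤ M ∧ ∀ j, M ≤ j →
      ¬(q2 ∉ T j ∧ q3 ∈ T (j + 1)) ∧ ¬(q4 ∉ T j ∧ q3 ∈ T (j + 1)) ∧
      ¬(q3 ∉ T j ∧ q2 ∈ T (j + 1)) ∧ ¬(q3 ∉ T j ∧ q4 ∈ T (j + 1)) := by
  by_cases hFull : ∃ j, 1 ≤ j ∧ (q2 ∈ T j ∧ q3 ∈ T j ∧ q4 ∈ T j)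
  · obtain ⟨j0, hj0, hb⟩ := hFull
    have hall : ∀ j, j0 ≤ j → q2 ∈ T j ∧ q3 ∈ T j ∧ q4 ∈ T j := by
      intro j hj
      induction j, hj using Nat.le_induction with
      | base => exact hb
      | succ n hn ih =>
        have h1 := le_trans hj0 hn
        exact ⟨(h3 n h1 ih.2.1).1, h2 n h1 ih.1, (h3 n h1 ih.2.1).2⟩
    refine ⟨j0, hj0, fun j hj => ?_⟩
    obtain ⟨ha2, ha3, ha4⟩ := hall j hj
    exact ⟨fun hc => hc.1 ha2, fun hc => hc.1 ha4, fun hc => hc.1 ha3, fun hc => hc.1 ha3⟩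
  · by_cases h3e : ∃ j, 1 ≤ j ∧ q3 ∈ T j
    · obtain ⟨j3, hj3, hq3⟩ := h3e
      have par : ∀ k, q3 ∈ T (j3 + 2 * k) ∧ (q2 ∈ T (j3 + 2 * k + 1) ∧ q4 ∈ T (j3 + 2 * k + 1)) := by
        intro k
        induction k with
        | zero => exact ⟨by simpa using hq3, by simpa using h3 j3 hj3 hq3⟩
        | succ n ih =>
          have e3 : q3 ∈ T (j3 + 2 * (n + 1)) := by
            have := h2 (j3 + 2 * n + 1) (by omega) ih.2.1
            convert this using 2 <;> omega
          refine ⟨e3, ?_⟩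
          have := h3 (j3 + 2 * (n + 1)) (by omega) e3
          simpa using this
      push_neg at hFull
      refine ⟨j3, hj3, fun j hj => ?_⟩
      obtain ⟨m, rfl⟩ : ∃ m, j = j3 + m := ⟨j - j3, by omega⟩
      rcases Nat.even_or_odd m with ⟨k, hk⟩ | ⟨k, hk⟩
      · -- m = 2k : q3 ∈ T j
        subst hk
        have e3 : q3 ∈ T (j3 + (k + k)) := by
          have := (par k).1; convert this using 2 <;> omega
        have e24 : q2 ∈ T (j3 + (k + k) + 1) ∧ q4 ∈ T (j3 + (k + k) + 1) := by
          have h := (par k).2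
          constructor
          · have h1 := h.1; convert h1 using 2 <;> omega
          · have h2' := h.2; convert h2' using 2 <;> omega
        refine ⟨fun hc => ?_, fun hc => ?_, fun hc => (hc.1 e3).elim, fun hc => (hc.1 e3).elim⟩
        · exact hFull (j3 + (k + k) + 1) (by omega) e24.1 hc.2 e24.2
        · exact hFull (j3 + (k + k) + 1) (by omega) e24.1 hc.2 e24.2
      · -- m = 2k+1 : q2, q4 ∈ T j, and q3 ∈ T (j+1)
        subst hk
        have e24 : q2 ∈ T (j3 + (2 * k + 1)) ∧ q4 ∈ T (j3 + (2 * k + 1)) := by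
          have := (par k).2
          constructor
          · have h := this.1; convert h using 2 <;> omega
          · have h := this.2; convert h using 2 <;> omega
        have e3' : q3 ∈ T (j3 + (2 * k + 1) + 1) := by
          have := (par (k + 1)).1; convert this using 2 <;> omega
        refine ⟨fun hc => (hc.1 e24.1).elim, fun hc => (hc.1 e24.2).elim,
          fun hc => ?_, fun hc => ?_⟩
        · -- q2 ∈ T (j+1), q3 ∈ T (j+1): from q2 get q3 ∈ T(j+2); also q2,q4 ∈ T(j+2) from q3 ∈ T(j+1)
          have hq2' := hc.2
          have h24 := h3 (j3 + (2 * k + 1) + 1) (by omega) e3'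
          have hq3'' := h2 (j3 + (2 * k + 1) + 1) (by omega) hq2'
          exact hFull (j3 + (2 * k + 1) + 2) (by omega) h24.1 hq3'' h24.2
        · have hq4' := hc.2
          have h24 := h3 (j3 + (2 * k + 1) + 1) (by omega) e3'
          have hq3'' := h4 (j3 + (2 * k + 1) + 1) (by omega) hq4'
          exact hFull (j3 + (2 * k + 1) + 2) (by omega) h24.1 hq3'' h24.2
    · push_neg at h3e
      have h2e : ∀ j, 1 ≤ j → q2 ∉ T j := fun j hj hm =>
        h3e (j + 1) (by omega) (h2 j hj hm)
      have h4e : ∀ j, 1 ≤ j → q4 ∉ T j := fun j hj hm =>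
        h3e (j + 1) (by omega) (h4 j hj hm)
      refine ⟨1, le_refl 1, fun j hj => ?_⟩
      exact ⟨fun hc => h3e (j + 1) (by omega) hc.2, fun hc => h3e (j + 1) (by omega) hc.2,
        fun hc => h2e (j + 1) (by omega) hc.2, fun hc => h4e (j + 1) (by omega) hc.2⟩

end Cap17

-- continuation: play-level lemmas (appended to aux.lean content for testing)
namespace Cap17
open Q17 A17

lemma S_nonempty (P : Play17) : ∀ n, (P.S n).Nonempty
  | 0 => ⟨Q17.q0, by rw [P.init]; rfl⟩
  | (n + 1) => by
    obtain ⟨q, hq⟩ := S_nonempty P n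
    have hqd : q ∈ dom (P.G n) := by rw [P.hdom n]; exact hq
    obtain ⟨r, hr⟩ := hqd
    exact ⟨r, by rw [← P.him n]; exact ⟨q, hr⟩⟩

lemma step_unique (P : Play17) {n : ℕ} {q q' : Q17} (hq : q ∈ P.S n)
    (h : ∀ r, d17 q (P.act n) r → r = q') : (q, q') ∈ P.G n ∧ q' ∈ P.S (n + 1) := by
  have hqd : q ∈ dom (P.G n) := by rw [P.hdom n]; exact hq
  obtain ⟨r, hr⟩ := hqd
  have hrq : r = q' := h r (P.compat n (q, r) hr)
  subst hrq
  exact ⟨hr, by rw [← P.him n]; exact ⟨q, hr⟩⟩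

lemma S1_sub (P : Play17) (h : P.act 0 = A17.c) : P.S 1 ⊆ Fs := by
  intro r hr
  have hrim : r ∈ im (P.G 0) := by rw [P.him 0]; exact hr
  obtain ⟨q, hq⟩ := hrim
  have hqd : q ∈ P.S 0 := by rw [← P.hdom 0]; exact ⟨r, hq⟩
  rw [P.init] at hqd
  have hq0 : q = Q17.q0 := hqd
  subst hq0
  have hd := P.compat 0 (Q17.q0, r) hq
  rw [h] at hd
  cases r <;> simp [d17] at hd <;> simp [Fs]

lemma step_sub (P : Play17) (n : ℕ) (hS : P.S n ⊆ Fs)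
    (hab : P.act n = A17.a ∨ P.act n = A17.b) : P.S (n + 1) ⊆ Fs := by
  intro r hr
  have hrim : r ∈ im (P.G n) := by rw [P.him n]; exact hr
  obtain ⟨q, hq⟩ := hrim
  have hqd : q ∈ P.S n := by rw [← P.hdom n]; exact ⟨r, hq⟩
  have hd := P.compat n (q, r) hq
  have hqF := hS hqd
  rcases hqF with h1 | h1 | h1 | h1 <;> subst h1 <;>
    rcases hab with hl | hl <;> rw [hl] at hd <;>
    cases r <;> simp [d17] at hd <;> simp [Fs]

lemma reach_tgt (P : Play17) (n : ℕ) (hsub : P.S n ⊆ Fs) (h2 : Q17.q2 ∉ P.S n)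
    (hc : P.act n = A17.c) : P.S (n + 1) = {Q17.tgt} := by
  have hfwd : ∀ r ∈ P.S (n + 1), r = Q17.tgt := by
    intro r hr
    have hrim : r ∈ im (P.G n) := by rw [P.him n]; exact hr
    obtain ⟨q, hq⟩ := hrim
    have hqd : q ∈ P.S n := by rw [← P.hdom n]; exact ⟨r, hq⟩
    have hd := P.compat n (q, r) hq
    rw [hc] at hd
    have hqF := hsub hqd
    rcases hqF with h1 | h1 | h1 | h1 <;> subst h1
    · cases r <;> first | rfl | simp [d17] at hd
    · exact absurd hqd h2
    · cases r <;> first | rfl | simp [d17] at hd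
    · cases r <;> first | rfl | simp [d17] at hd
  obtain ⟨r0, hr0⟩ := S_nonempty P (n + 1)
  have hr0t := hfwd r0 hr0
  subst hr0t
  ext r
  constructor
  · intro hr; exact hfwd r hr
  · intro hr; have : r = Q17.tgt := hr; subst this; exact hr0

/-! ### The four counter-plays against a positional strategy -/

def Psink (σ : Set Q17 → A17) (h0 : σ {Q17.q0} ≠ A17.c) : Play17 where
  S := fun n => if n = 0 then {Q17.q0} else {Q17.sink}
  act := fun n => σ (if n = 0 then {Q17.q0} else {Q17.sink})
  G := fun n => if n = 0 then G0sink else Gsink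
  init := by simp
  compat := by
    intro n p hp
    by_cases h : n = 0
    · subst h
      simp only [reduceIte] at hp ⊢
      simp [G0sink] at hp
      subst hp
      cases hl : σ {Q17.q0}
      · exact True.intro
      · exact True.intro
      · exact absurd hl h0
    · simp only [if_neg h] at hp ⊢
      simp [Gsink] at hp
      subst hp
      cases σ ({Q17.sink} : Set Q17) <;> exact True.intro
  hdom := by
    intro n
    by_cases h : n = 0
    · subst h; simp [dom_G0sink]
    · simp [if_neg h, dom_Gsink]
  him := by
    intro n
    by_cases h : n = 0
    · subst h; simp [im_G0sink]
    · simp [if_neg h, im_Gsink]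

lemma not_win_sink (σ : Set Q17 → A17) (h0 : σ {Q17.q0} ≠ A17.c) :
    ¬ WinPlay (Psink σ h0) := by
  rintro (⟨n, hn⟩ | ⟨T, hAcc, hInf⟩)
  · revert hn
    show (if n = 0 then _ else _) = _ → False
    by_cases h : n = 0
    · simp only [h, reduceIte]; exact q0_ne_tgt
    · simp only [if_neg h]; exact sink_ne_tgt
  · have hG : ∀ j, 1 ≤ j → (Psink σ h0).G j = Gsink := by
      intro j hj
      show (if j = 0 then _ else _) = _
      rw [if_neg (by omega)]
    obtain ⟨M, hM1, hM⟩ := persistent T Q17.sink 1 (fun j hj hm =>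
      hAcc.2 j _ _ hm (by rw [hG j hj]; simp [Gsink]))
    apply hInf (entries_finite_of_bound _ T M ?_)
    intro e he
    by_contra hlt
    push_neg at hlt
    have hj1 : 1 ≤ e.1 := le_trans hM1 hlt
    have hge := he.1
    rw [hG e.1 hj1] at hge
    simp [Gsink, Prod.ext_iff] at hge
    exact hM e.1 hlt ⟨hge.1 ▸ he.2.1, hge.2 ▸ he.2.2⟩

def P2a (σ : Set Q17 → A17) (h0 : σ {Q17.q0} = A17.c) (hF : σ Fs = A17.a) : Play17 where
  S := fun n => if n = 0 then {Q17.q0} else Fs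
  act := fun n => σ (if n = 0 then {Q17.q0} else Fs)
  G := fun n => if n = 0 then G0full else Ea
  init := by simp
  compat := by
    intro n p hp
    by_cases h : n = 0
    · subst h
      simp only [reduceIte] at hp ⊢
      rw [h0]
      simp [G0full] at hp
      rcases hp with rfl | rfl | rfl | rfl <;> exact True.intro
    · simp only [if_neg h] at hp ⊢
      rw [hF]
      simp [Ea] at hp
      rcases hp with rfl | rfl | rfl | rfl <;> exact True.intro
  hdom := by
    intro n
    by_cases h : n = 0
    · subst h; simp [dom_G0full]
    · simp [if_neg h, dom_Ea]
  him := by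
    intro n
    by_cases h : n = 0
    · subst h; simp [im_G0full]
    · simp [if_neg h, im_Ea]

lemma not_win_2a (σ : Set Q17 → A17) (h0 : σ {Q17.q0} = A17.c) (hF : σ Fs = A17.a) :
    ¬ WinPlay (P2a σ h0 hF) := by
  rintro (⟨n, hn⟩ | ⟨T, hAcc, hInf⟩)
  · revert hn
    show (if n = 0 then _ else _) = _ → False
    by_cases h : n = 0
    · simp only [h, reduceIte]; exact q0_ne_tgt
    · simp only [if_neg h]; exact Fs_ne_tgt
  · have hG : ∀ j, 1 ≤ j → (P2a σ h0 hF).G j = Ea := by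
      intro j hj
      show (if j = 0 then _ else _) = _
      rw [if_neg (by omega)]
    obtain ⟨M1, hM1a, hM1⟩ := pair_swap T Q17.q1 Q17.q2
      (fun j hj hm => hAcc.2 j _ _ hm (by rw [hG j hj]; simp [Ea]))
      (fun j hj hm => hAcc.2 j _ _ hm (by rw [hG j hj]; simp [Ea]))
    obtain ⟨M2, hM2a, hM2⟩ := pair_swap T Q17.q3 Q17.q4
      (fun j hj hm => hAcc.2 j _ _ hm (by rw [hG j hj]; simp [Ea]))
      (fun j hj hm => hAcc.2 j _ _ hm (by rw [hG j hj]; simp [Ea]))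
    apply hInf (entries_finite_of_bound _ T (max M1 M2) ?_)
    intro e he
    by_contra hlt
    push_neg at hlt
    have hj1 : 1 ≤ e.1 := le_trans (le_trans hM1a (le_max_left _ _)) hlt
    have hge := he.1
    rw [hG e.1 hj1] at hge
    simp [Ea, Prod.ext_iff] at hge
    have hl1 : M1 ≤ e.1 := le_trans (le_max_left _ _) hlt
    have hl2 : M2 ≤ e.1 := le_trans (le_max_right _ _) hlt
    rcases hge with ⟨h1, h2⟩ | ⟨h1, h2⟩ | ⟨h1, h2⟩ | ⟨h1, h2⟩
    · exact (hM1 e.1 hl1).1 ⟨h1 ▸ he.2.1, h2 ▸ he.2.2⟩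
    · exact (hM1 e.1 hl1).2 ⟨h1 ▸ he.2.1, h2 ▸ he.2.2⟩
    · exact (hM2 e.1 hl2).1 ⟨h1 ▸ he.2.1, h2 ▸ he.2.2⟩
    · exact (hM2 e.1 hl2).2 ⟨h1 ▸ he.2.1, h2 ▸ he.2.2⟩

def P2b (σ : Set Q17 → A17) (h0 : σ {Q17.q0} = A17.c) (hF : σ Fs = A17.c) : Play17 where
  S := fun n => if n = 0 then {Q17.q0} else if n = 1 then Fs else TS
  act := fun n => σ (if n = 0 then {Q17.q0} else if n = 1 then Fs else TS)
  G := fun n => if n = 0 then G0full else if n = 1 then Gc else Gid2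
  init := by simp
  compat := by
    intro n p hp
    by_cases h : n = 0
    · subst h
      simp only [reduceIte] at hp ⊢
      rw [h0]
      simp [G0full] at hp
      rcases hp with rfl | rfl | rfl | rfl <;> exact True.intro
    · by_cases h1 : n = 1
      · subst h1
        simp only [if_neg (by omega : ¬(1:ℕ) = 0), reduceIte] at hp ⊢
        rw [hF]
        simp [Gc] at hp
        rcases hp with rfl | rfl | rfl | rfl <;> exact True.intro
      · simp only [if_neg h, if_neg h1] at hp ⊢
        simp [Gid2] at hp
        rcases hp with rfl | rfl <;> cases σ TS <;> exact True.intro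
  hdom := by
    intro n
    by_cases h : n = 0
    · subst h; simp [dom_G0full]
    · by_cases h1 : n = 1
      · subst h1; simp [dom_Gc]
      · simp [if_neg h, if_neg h1, dom_Gid2]
  him := by
    intro n
    by_cases h : n = 0
    · subst h; simp [im_G0full]
    · by_cases h1 : n = 1
      · subst h1; simp [im_Gc]
      · have h2 : n + 1 ≠ 0 := by omega
        have h3 : n + 1 ≠ 1 := by omega
        simp [if_neg h, if_neg h1, if_neg h2, if_neg h3, im_Gid2]

lemma not_win_2b (σ : Set Q17 → A17) (h0 : σ {Q17.q0} = A17.c) (hF : σ Fs = A17.c) :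
    ¬ WinPlay (P2b σ h0 hF) := by
  rintro (⟨n, hn⟩ | ⟨T, hAcc, hInf⟩)
  · revert hn
    show (if n = 0 then _ else _) = _ → False
    by_cases h : n = 0
    · simp only [h, reduceIte]; exact q0_ne_tgt
    · by_cases h1 : n = 1
      · simp only [h1, if_neg (by omega : ¬(1:ℕ) = 0), reduceIte]; exact Fs_ne_tgt
      · simp only [if_neg h, if_neg h1]; exact TS_ne_tgt
  · have hG : ∀ j, 2 ≤ j → (P2b σ h0 hF).G j = Gid2 := by
      intro j hj
      show (if j = 0 then _ else _) = _
      rw [if_neg (by omega), if_neg (by omega)]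
    obtain ⟨Mt, hMt2, hMt⟩ := persistent T Q17.tgt 2 (fun j hj hm =>
      hAcc.2 j _ _ hm (by rw [hG j hj]; simp [Gid2]))
    obtain ⟨Ms, hMs2, hMs⟩ := persistent T Q17.sink 2 (fun j hj hm =>
      hAcc.2 j _ _ hm (by rw [hG j hj]; simp [Gid2]))
    apply hInf (entries_finite_of_bound _ T (max Mt Ms) ?_)
    intro e he
    by_contra hlt
    push_neg at hlt
    have hj2 : 2 ≤ e.1 := le_trans (le_trans hMt2 (le_max_left _ _)) hlt
    have hge := he.1
    rw [hG e.1 hj2] at hge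
    simp [Gid2, Prod.ext_iff] at hge
    rcases hge with ⟨h1, h2⟩ | ⟨h1, h2⟩
    · exact hMt e.1 (le_trans (le_max_left _ _) hlt) ⟨h1 ▸ he.2.1, h2 ▸ he.2.2⟩
    · exact hMs e.1 (le_trans (le_max_right _ _) hlt) ⟨h1 ▸ he.2.1, h2 ▸ he.2.2⟩

def P2c (σ : Set Q17 → A17) (h0 : σ {Q17.q0} = A17.c) (hF : σ Fs = A17.b) : Play17 where
  S := fun n => if n = 0 then {Q17.q0} else Fs
  act := fun n => σ (if n = 0 then {Q17.q0} else Fs)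
  G := fun n => if n = 0 then G0full else Eb
  init := by simp
  compat := by
    intro n p hp
    by_cases h : n = 0
    · subst h
      simp only [reduceIte] at hp ⊢
      rw [h0]
      simp [G0full] at hp
      rcases hp with rfl | rfl | rfl | rfl <;> exact True.intro
    · simp only [if_neg h] at hp ⊢
      rw [hF]
      simp [Eb] at hp
      rcases hp with rfl | rfl | rfl | rfl | rfl <;> exact True.intro
  hdom := by
    intro n
    by_cases h : n = 0
    · subst h; simp [dom_G0full]
    · simp [if_neg h, dom_Eb]
  him := by
    intro n
    by_cases h : n = 0
    · subst h; simp [im_G0full]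
    · simp [if_neg h, im_Eb]

lemma not_win_2c (σ : Set Q17 → A17) (h0 : σ {Q17.q0} = A17.c) (hF : σ Fs = A17.b) :
    ¬ WinPlay (P2c σ h0 hF) := by
  rintro (⟨n, hn⟩ | ⟨T, hAcc, hInf⟩)
  · revert hn
    show (if n = 0 then _ else _) = _ → False
    by_cases h : n = 0
    · simp only [h, reduceIte]; exact q0_ne_tgt
    · simp only [if_neg h]; exact Fs_ne_tgt
  · have hG : ∀ j, 1 ≤ j → (P2c σ h0 hF).G j = Eb := by
      intro j hj
      show (if j = 0 then _ else _) = _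
      rw [if_neg (by omega)]
    obtain ⟨M1, hM1a, hM1⟩ := persistent T Q17.q1 1 (fun j hj hm =>
      hAcc.2 j _ _ hm (by rw [hG j hj]; simp [Eb]))
    obtain ⟨M2, hM2a, hM2⟩ := eb_bound T
      (fun j hj hm => hAcc.2 j _ _ hm (by rw [hG j hj]; simp [Eb]))
      (fun j hj hm => hAcc.2 j _ _ hm (by rw [hG j hj]; simp [Eb]))
      (fun j hj hm => ⟨hAcc.2 j _ _ hm (by rw [hG j hj]; simp [Eb]),
        hAcc.2 j _ _ hm (by rw [hG j hj]; simp [Eb])⟩)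
    apply hInf (entries_finite_of_bound _ T (max M1 M2) ?_)
    intro e he
    by_contra hlt
    push_neg at hlt
    have hj1 : 1 ≤ e.1 := le_trans (le_trans hM1a (le_max_left _ _)) hlt
    have hge := he.1
    rw [hG e.1 hj1] at hge
    simp [Eb, Prod.ext_iff] at hge
    have hl1 : M1 ≤ e.1 := le_trans (le_max_left _ _) hlt
    have hl2 : M2 ≤ e.1 := le_trans (le_max_right _ _) hlt
    rcases hge with ⟨h1, h2⟩ | ⟨h1, h2⟩ | ⟨h1, h2⟩ | ⟨h1, h2⟩ | ⟨h1, h2⟩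
    · exact hM1 e.1 hl1 ⟨h1 ▸ he.2.1, h2 ▸ he.2.2⟩
    · exact (hM2 e.1 hl2).1 ⟨h1 ▸ he.2.1, h2 ▸ he.2.2⟩
    · exact (hM2 e.1 hl2).2.2.1 ⟨h1 ▸ he.2.1, h2 ▸ he.2.2⟩
    · exact (hM2 e.1 hl2).2.2.2 ⟨h1 ▸ he.2.1, h2 ▸ he.2.2⟩
    · exact (hM2 e.1 hl2).2.1 ⟨h1 ▸ he.2.1, h2 ▸ he.2.2⟩

end Cap17

namespace Cap17
open Q17 A17

def TT : ℕ → Set Q17 := fun n =>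
  if n = 0 then ∅
  else if n = 1 ∨ n = 4 then {Q17.q2}
  else if n = 2 ∨ n = 3 then {Q17.q1}
  else if n % 2 = 1 then {Q17.q3} else {Q17.q4}

lemma TT0 : TT 0 = ∅ := by simp [TT]
lemma TT1 : TT 1 = {Q17.q2} := by simp [TT]
lemma TT2 : TT 2 = {Q17.q1} := by simp [TT]
lemma TT3 : TT 3 = {Q17.q1} := by simp [TT]
lemma TT4 : TT 4 = {Q17.q2} := by simp [TT]
lemma TT5 : TT 5 = {Q17.q3} := by simp [TT]
lemma TTodd : ∀ j, 5 ≤ j → j % 2 = 1 → TT j = {Q17.q3} := by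
  intro j h5 hp
  simp only [TT]
  rw [if_neg (by omega), if_neg (by omega), if_neg (by omega), if_pos hp]
lemma TTeven : ∀ j, 6 ≤ j → j % 2 = 0 → TT j = {Q17.q4} := by
  intro j h6 hp
  simp only [TT]
  rw [if_neg (by omega), if_neg (by omega), if_neg (by omega), if_neg (by omega)]

lemma d17_q2a : ∀ r, d17 Q17.q2 A17.a r → r = Q17.q1 := by
  intro r hr; cases r <;> first | rfl | simp [d17] at hr
lemma d17_q1b : ∀ r, d17 Q17.q1 A17.b r → r = Q17.q1 := by
  intro r hr; cases r <;> first | rfl | simp [d17] at hr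
lemma d17_q1a : ∀ r, d17 Q17.q1 A17.a r → r = Q17.q2 := by
  intro r hr; cases r <;> first | rfl | simp [d17] at hr
lemma d17_q2b : ∀ r, d17 Q17.q2 A17.b r → r = Q17.q3 := by
  intro r hr; cases r <;> first | rfl | simp [d17] at hr
lemma d17_q3a : ∀ r, d17 Q17.q3 A17.a r → r = Q17.q4 := by
  intro r hr; cases r <;> first | rfl | simp [d17] at hr
lemma d17_q4b : ∀ r, d17 Q17.q4 A17.b r → r = Q17.q3 := by
  intro r hr; cases r <;> first | rfl | simp [d17] at hr

lemma act_cast (P : Play17) {n : ℕ} {l : A17} {q q' : Q17} (hl : P.act n = l)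
    (h : ∀ r, d17 q l r → r = q') : ∀ r, d17 q (P.act n) r → r = q' :=
  fun r hr => h r (by rwa [hl] at hr)

end Cap17

/-- In the capacity game of the NFA of Figure 5, Player 1 has no positional
(memoryless) winning strategy, but has a finite-memory winning strategy. -/
theorem stmt17 :
    (¬ ∃ σ : Set Q17 → A17,
        ∀ P : Play17, (∀ n, P.act n = σ (P.S n)) → WinPlay P) ∧
    (∃ (M : Type) (_ : Finite M) (m0 : M)
        (upd : M → Set Q17 × A17 × Set (Q17 × Q17) → M) (out : M → Set Q17 → A17),
        ∀ (P : Play17) (mem : ℕ → M),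
          mem 0 = m0 →
          (∀ n, mem (n + 1) = upd (mem n) (P.S n, P.act n, P.G n)) →
          (∀ n, P.act n = out (mem n) (P.S n)) →
          WinPlay P) := by
  constructor
  · rintro ⟨σ, hσ⟩
    by_cases h0 : σ {Q17.q0} = A17.c
    · cases hF : σ Cap17.Fs with
      | a => exact Cap17.not_win_2a σ h0 hF (hσ (Cap17.P2a σ h0 hF) (fun n => rfl))
      | b => exact Cap17.not_win_2c σ h0 hF (hσ (Cap17.P2c σ h0 hF) (fun n => rfl))
      | c => exact Cap17.not_win_2b σ h0 hF (hσ (Cap17.P2b σ h0 hF) (fun n => rfl))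
    · exact Cap17.not_win_sink σ h0 (hσ (Cap17.Psink σ h0) (fun n => rfl))
  · classical
    refine ⟨Fin 3, inferInstance, 0,
      fun m _ => if m = 0 then 1 else if m = 1 then 2 else 1,
      fun m S => if m = 0 then A17.c
        else if Q17.q2 ∈ S then (if m = 1 then A17.a else A17.b) else A17.c,
      ?_⟩
    intro P mem h0 hupd hout
    have hmem : ∀ n, mem n = if n = 0 then (0 : Fin 3) else if n % 2 = 1 then 1 else 2 := by
      intro n
      induction n with
      | zero => simpa using h0
      | succ n ih =>
        rw [hupd n, ih]
        by_cases hn : n = 0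
        · subst hn; simp
        · rcases Nat.mod_two_eq_zero_or_one n with h | h
          · have h2 : (n + 1) % 2 = 1 := by omega
            simp [hn, h, h2]
          · have h2 : (n + 1) % 2 = 0 := by omega
            simp [hn, h, h2]
    have hact0 : P.act 0 = A17.c := by rw [hout 0, hmem 0]; simp
    have hacta : ∀ n, n % 2 = 1 → Q17.q2 ∈ P.S n → P.act n = A17.a := by
      intro n hp hq
      rw [hout n, hmem n]
      have hn : n ≠ 0 := by omega
      simp [hn, hp, hq]
    have hactb : ∀ n, n ≠ 0 → n % 2 = 0 → Q17.q2 ∈ P.S n → P.act n = A17.b := by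
      intro n hn hp hq
      rw [hout n, hmem n]
      simp [hn, hp, hq]
    have hactc : ∀ n, n ≠ 0 → Q17.q2 ∉ P.S n → P.act n = A17.c := by
      intro n hn hq
      rw [hout n, hmem n]
      rcases Nat.mod_two_eq_zero_or_one n with h | h <;> simp [hn, h, hq]
    by_cases hex : ∃ n, 1 ≤ n ∧ Q17.q2 ∉ P.S n
    · -- Player 1 plays c at the first q2-free support and reaches {tgt}
      left
      have hspec := Nat.find_spec hex
      have hmin : ∀ k, k < Nat.find hex → ¬(1 ≤ k ∧ Q17.q2 ∉ P.S k) :=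
        fun k hk => Nat.find_min hex hk
      have hn1 : 1 ≤ Nat.find hex := hspec.1
      have hsub : ∀ k, 1 ≤ k → k ≤ Nat.find hex → P.S k ⊆ Cap17.Fs := by
        intro k hk1 hk2
        induction k with
        | zero => omega
        | succ k ih =>
          by_cases hk : k = 0
          · subst hk; exact Cap17.S1_sub P hact0
          · have hq2k : Q17.q2 ∈ P.S k := by
              by_contra hq
              exact hmin k (by omega) ⟨by omega, hq⟩
            have hsk := ih (by omega) (by omega)
            refine Cap17.step_sub P k hsk ?_
            rcases Nat.mod_two_eq_zero_or_one k with h | h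
            · exact Or.inr (hactb k hk h hq2k)
            · exact Or.inl (hacta k h hq2k)
      exact ⟨Nat.find hex + 1,
        Cap17.reach_tgt P (Nat.find hex) (hsub _ hn1 (le_refl _)) hspec.2
          (hactc _ (by omega) hspec.2)⟩
    · -- q2 stays in the support forever: the play has infinite capacity
      right
      push_neg at hex
      have hq2 : ∀ n, 1 ≤ n → Q17.q2 ∈ P.S n := hex
      have hA : ∀ n, n % 2 = 1 → P.act n = A17.a :=
        fun n h => hacta n h (hq2 n (by omega))
      have hB : ∀ n, 1 ≤ n → n % 2 = 0 → P.act n = A17.b :=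
        fun n h1 h2 => hactb n (by omega) h2 (hq2 n h1)
      have c1 : Q17.q2 ∈ P.S 1 := hq2 1 (le_refl 1)
      have s2 := Cap17.step_unique P c1 (Cap17.act_cast P (hA 1 rfl) Cap17.d17_q2a)
      have s3 := Cap17.step_unique P s2.2
        (Cap17.act_cast P (hB 2 (by omega) rfl) Cap17.d17_q1b)
      have s4 := Cap17.step_unique P s3.2 (Cap17.act_cast P (hA 3 rfl) Cap17.d17_q1a)
      have s5 := Cap17.step_unique P (hq2 4 (by omega))
        (Cap17.act_cast P (hB 4 (by omega) rfl) Cap17.d17_q2b)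
      have chain : ∀ k, Q17.q3 ∈ P.S (2 * k + 5) ∧ Q17.q4 ∈ P.S (2 * k + 6) := by
        intro k
        induction k with
        | zero =>
          have h6 := Cap17.step_unique P s5.2 (Cap17.act_cast P (hA 5 rfl) Cap17.d17_q3a)
          exact ⟨s5.2, h6.2⟩
        | succ k ih =>
          have h7 := Cap17.step_unique P ih.2
            (Cap17.act_cast P (hB (2 * k + 6) (by omega) (by omega)) Cap17.d17_q4b)
          have h7' : Q17.q3 ∈ P.S (2 * (k + 1) + 5) := by
            have := h7.2; convert this using 2 <;> omega
          have h8 := Cap17.step_unique P h7'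
            (Cap17.act_cast P (hA (2 * (k + 1) + 5) (by omega)) Cap17.d17_q3a)
          have h8' : Q17.q4 ∈ P.S (2 * (k + 1) + 6) := by
            have := h8.2; convert this using 2 <;> omega
          exact ⟨h7', h8'⟩
      have codd : ∀ j, 5 ≤ j → j % 2 = 1 → Q17.q3 ∈ P.S j := by
        intro j h5 hp
        obtain ⟨k, rfl⟩ : ∃ k, j = 2 * k + 5 := ⟨(j - 5) / 2, by omega⟩
        exact (chain k).1
      have ceven : ∀ j, 6 ≤ j → j % 2 = 0 → Q17.q4 ∈ P.S j := by
        intro j h6 hp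
        obtain ⟨k, rfl⟩ : ∃ k, j = 2 * k + 6 := ⟨(j - 6) / 2, by omega⟩
        exact (chain k).2
      refine ⟨Cap17.TT, ⟨?_, ?_⟩, ?_⟩
      · -- TT j ⊆ S j
        intro j
        rcases lt_or_ge j 6 with h | h
        · interval_cases j
          · rw [Cap17.TT0]; exact fun s hs => hs.elim
          · rw [Cap17.TT1]; intro s hs; have : s = Q17.q2 := hs; subst this; exact c1
          · rw [Cap17.TT2]; intro s hs; have : s = Q17.q1 := hs; subst this; exact s2.2
          · rw [Cap17.TT3]; intro s hs; have : s = Q17.q1 := hs; subst this; exact s3.2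
          · rw [Cap17.TT4]; intro s hs; have : s = Q17.q2 := hs; subst this
            exact hq2 4 (by omega)
          · rw [Cap17.TT5]; intro s hs; have : s = Q17.q3 := hs; subst this; exact s5.2
        · rcases Nat.mod_two_eq_zero_or_one j with hp | hp
          · rw [Cap17.TTeven j h hp]; intro s hs; have : s = Q17.q4 := hs; subst this
            exact ceven j h hp
          · rw [Cap17.TTodd j (by omega) hp]; intro s hs; have : s = Q17.q3 := hs
            subst this; exact codd j (by omega) hp
      · -- closure
        intro j s t hs hG
        have hd := P.compat j (s, t) hG
        rcases lt_or_ge j 6 with h | h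
        · interval_cases j
          · rw [Cap17.TT0] at hs; exact hs.elim
          · rw [Cap17.TT1] at hs; have : s = Q17.q2 := hs; subst this
            have := Cap17.act_cast P (hA 1 rfl) Cap17.d17_q2a t hd
            subst this; rw [Cap17.TT2]; rfl
          · rw [Cap17.TT2] at hs; have : s = Q17.q1 := hs; subst this
            have := Cap17.act_cast P (hB 2 (by omega) rfl) Cap17.d17_q1b t hd
            subst this; rw [Cap17.TT3]; rfl
          · rw [Cap17.TT3] at hs; have : s = Q17.q1 := hs; subst this
            have := Cap17.act_cast P (hA 3 rfl) Cap17.d17_q1a t hd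
            subst this; rw [Cap17.TT4]; rfl
          · rw [Cap17.TT4] at hs; have : s = Q17.q2 := hs; subst this
            have := Cap17.act_cast P (hB 4 (by omega) rfl) Cap17.d17_q2b t hd
            subst this; rw [Cap17.TT5]; rfl
          · rw [Cap17.TT5] at hs; have : s = Q17.q3 := hs; subst this
            have := Cap17.act_cast P (hA 5 rfl) Cap17.d17_q3a t hd
            subst this; rw [Cap17.TTeven 6 (by omega) (by omega)]; rfl
        · rcases Nat.mod_two_eq_zero_or_one j with hp | hp
          · rw [Cap17.TTeven j h hp] at hs; have : s = Q17.q4 := hs; subst this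
            have := Cap17.act_cast P (hB j (by omega) hp) Cap17.d17_q4b t hd
            subst this; rw [Cap17.TTodd (j + 1) (by omega) (by omega)]; rfl
          · rw [Cap17.TTodd j (by omega) hp] at hs; have : s = Q17.q3 := hs; subst this
            have := Cap17.act_cast P (hA j hp) Cap17.d17_q3a t hd
            subst this; rw [Cap17.TTeven (j + 1) (by omega) (by omega)]; rfl
      · -- infinitely many entries (2k+6, q2, q3)
        refine Set.infinite_of_injective_forall_mem
          (f := fun k : ℕ => ((2 * k + 6, (Q17.q2, Q17.q3)) : ℕ × Q17 × Q17)) ?_ ?_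
        · intro k1 k2 hk
          simp only [Prod.mk.injEq] at hk
          omega
        · intro k
          refine ⟨?_, ?_, ?_⟩
          · exact (Cap17.step_unique P (hq2 (2 * k + 6) (by omega))
              (Cap17.act_cast P (hB (2 * k + 6) (by omega) (by omega)) Cap17.d17_q2b)).1
          · rw [Cap17.TTeven (2 * k + 6) (by omega) (by omega)]
            intro hc
            exact absurd (show Q17.q2 = Q17.q4 from hc) (by simp)
          · rw [Cap17.TTodd (2 * k + 6 + 1) (by omega) (by omega)]; rfl
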